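/- For every number of workers $w$, there exists $t_0 = \operatorname{tow}(O(w))$ such that for all $t \ge t_0$, every worker-task assignment function on $w$ workers and task universe $[t]$ has switching cost exactly $w$: there exist tasks $\tau_1 < \tau_2 < \cdots < \tau_{w+1}$ in $[t]$ such that the assignments for the adjacent task sets $\{\tau_1, \dots, \tau_w\}$ and $\{\tau_2, \dots, \tau_{w+1}\}$ differ on every worker. -/

import Mathlib

/-!
Colour each `w`-set of tasks by the permutation `π` telling which of its tasks, in increasing
order, each worker gets. By the hypergraph Ramsey theorem some `τ₁ < ⋯ < τ_{w+1}` has both of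
its `w`-subsets `{τ₁, …, τ_w}` and `{τ₂, …, τ_{w+1}}` of the same colour `π`; then worker `i`
gets `τ_{π i}` in the first and `τ_{π i + 1}` in the second, a different task.

The tower bound is the Erdős–Rado one: a set of size `(2 |κ| ^ 2 ^ x) ^ x` contains an
end-homogeneous set of size `x`, on which the colour of a `(k+1)`-set depends only on its
first `k` elements; this costs three levels of the tower per uniformity.
-/

open Finset

def tow : ℕ → ℕ
  | 0 => 1
  | n + 1 => 2 ^ tow n

lemma lt_tow (n : ℕ) : n < tow n := by
  induction n with
  | zero => exact Nat.one_pos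
  | succ n ih => exact (Nat.succ_le_of_lt ih).trans_lt Nat.lt_two_pow_self

lemma tow_mono : Monotone tow :=
  monotone_nat_of_le_succ fun _ => Nat.lt_two_pow_self.le

lemma four_le_tow {m : ℕ} (hm : 2 ≤ m) : 4 ≤ tow m :=
  tow_mono hm

lemma mul_self_le_two_pow {x : ℕ} (hx : 4 ≤ x) : x * x ≤ 2 ^ x := by
  induction x, hx using Nat.le_induction with
  | base => norm_num
  | succ x hx ih => rw [pow_succ]; nlinarith

lemma pow_self_le_tow (w : ℕ) : w ^ w ≤ tow (2 * w + 3) :=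
  calc w ^ w ≤ (2 ^ w) ^ w := Nat.pow_le_pow_left Nat.lt_two_pow_self.le _
    _ = 2 ^ (w * w) := by rw [← pow_mul, mul_comm]
    _ ≤ 2 ^ (2 ^ w * 2 ^ w) := by gcongr <;> exact Nat.lt_two_pow_self.le
    _ = 2 ^ 2 ^ (2 * w) := by rw [← pow_add, two_mul]
    _ ≤ 2 ^ 2 ^ tow (2 * w + 1) := by
        gcongr <;> [norm_num; norm_num; exact (lt_tow _).le.trans' (by omega)]
    _ = tow (2 * w + 3) := rfl

lemma two_mul_pow_two_pow_pow_le {c x : ℕ} (hx : 4 ≤ x) (hc : c ≤ x) :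
    (2 * c ^ 2 ^ x) ^ x ≤ 2 ^ 2 ^ 2 ^ x := by
  have hsq := mul_self_le_two_pow hx
  have hexp : x * (2 ^ x + 1) * x ≤ 2 ^ 2 ^ x :=
    calc x * (2 ^ x + 1) * x ≤ 2 ^ x * (2 ^ x * 2) := by nlinarith [Nat.one_le_two_pow (n := x)]
      _ = 2 ^ (2 * x + 1) := by ring
      _ ≤ 2 ^ 2 ^ x := Nat.pow_le_pow_right (by norm_num) (by nlinarith)
  calc (2 * c ^ 2 ^ x) ^ x ≤ (2 ^ x * (2 ^ x) ^ 2 ^ x) ^ x := by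
        gcongr
        · exact Nat.le_self_pow (by omega) 2
        · exact hc.trans Nat.lt_two_pow_self.le
    _ = 2 ^ (x * (2 ^ x + 1) * x) := by rw [← pow_succ', ← pow_mul, ← pow_mul, mul_assoc]
    _ ≤ 2 ^ 2 ^ 2 ^ x := Nat.pow_le_pow_right (by norm_num) hexp

lemma exists_lt_mul_card_fiber_add_one {α β : Type*} [DecidableEq β] [Fintype β] [Nonempty β]
    (f : α → β) (s : Finset α) : ∃ b, #s < Fintype.card β * (#{x ∈ s | f x = b} + 1) := by
  obtain ⟨b, -, hb⟩ := exists_le_card_fiber_of_mul_le_card_of_maps_to (f := f) (t := univ)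
    (n := #s / Fintype.card β) (fun _ _ => mem_univ _) univ_nonempty
    (by rw [card_univ]; exact Nat.mul_div_le _ _)
  exact ⟨b, (Nat.lt_mul_div_succ _ Fintype.card_pos).trans_le (by gcongr)⟩

section Ramsey

variable {α κ : Type*}

def IsHomogeneous (C : Finset α → κ) (k : ℕ) (M : Finset α) : Prop :=
  ∀ ⦃T₁⦄, T₁ ⊆ M → #T₁ = k → ∀ ⦃T₂⦄, T₂ ⊆ M → #T₂ = k → C T₁ = C T₂

lemma exists_isHomogeneous_one [Fintype κ] (C : Finset α → κ) {n : ℕ}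
    {S : Finset α} (hS : Fintype.card κ * n ≤ #S) :
    ∃ M ⊆ S, #M = n ∧ IsHomogeneous C 1 M := by
  classical
  have : Nonempty κ := ⟨C ∅⟩
  obtain ⟨c, -, hc⟩ := exists_le_card_fiber_of_mul_le_card_of_maps_to (f := fun x => C {x})
    (fun x _ => mem_univ _) univ_nonempty (by rwa [card_univ])
  obtain ⟨M, hM, hMn⟩ := exists_subset_card_eq hc
  refine ⟨M, hM.trans (filter_subset _ _), hMn, ?_⟩
  intro T₁ hT₁ hT₁k T₂ hT₂ hT₂k
  obtain ⟨x₁, rfl⟩ := card_eq_one.1 hT₁k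
  obtain ⟨x₂, rfl⟩ := card_eq_one.1 hT₂k
  rw [(mem_filter.1 (hM (singleton_subset_iff.1 hT₁))).2,
    (mem_filter.1 (hM (singleton_subset_iff.1 hT₂))).2]

variable [LinearOrder α]

def IsEndHomogeneous (C : Finset α → κ) (k : ℕ) (A X : Finset α) : Prop :=
  ∀ T ⊆ A, #T = k → ∀ x ∈ X, ∀ y ∈ X, (∀ t ∈ T, t < x) → (∀ t ∈ T, t < y) →
    C (insert x T) = C (insert y T)

lemma IsEndHomogeneous.anti {C : Finset α → κ} {k : ℕ} {A X Y : Finset α}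
    (h : IsEndHomogeneous C k A X) (hYX : Y ⊆ X) : IsEndHomogeneous C k A Y :=
  fun T hT hTk x hx y hy => h T hT hTk x (hYX hx) y (hYX hy)

lemma isEndHomogeneous_empty {C : Finset α → κ} {k : ℕ} (hk : 1 ≤ k) (X : Finset α) :
    IsEndHomogeneous C k ∅ X := by
  intro T hT hTk
  rw [subset_empty.1 hT, card_empty] at hTk
  omega

/-- One Erdős–Rado step: move the least element `a` of the pool `P` into `A`, and keep only
those elements of the pool that induce, on the `k`-subsets of `insert a A`, the most frequent
pattern of colours. -/
lemma IsEndHomogeneous.exists_insert [Fintype κ] {C : Finset α → κ} {k K : ℕ} {A P : Finset α}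
    (hAP : ∀ a ∈ A, ∀ p ∈ P, a < p) (hA : IsEndHomogeneous C k A (A ∪ P))
    (hK : Fintype.card κ ^ 2 ^ (#A + 1) ≤ K) (hP : P.Nonempty) :
    ∃ a ∉ A, ∃ P' : Finset α, (∀ b ∈ insert a A, ∀ p ∈ P', b < p) ∧
      insert a A ∪ P' ⊆ A ∪ P ∧ IsEndHomogeneous C k (insert a A) (insert a A ∪ P') ∧
      #P ≤ K * (#P' + 1) := by
  classical
  have : Nonempty κ := ⟨C ∅⟩
  set a := P.min' hP
  have haP : a ∈ P := P.min'_mem hP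
  have hAa : ∀ b ∈ A, b < a := fun b hb => hAP b hb a haP
  set s := (insert a A).powersetCard k
  let f : α → (s → κ) := fun x T => C (insert x T)
  obtain ⟨pattern, hpattern⟩ := exists_lt_mul_card_fiber_add_one f (P.erase a)
  set P' := {x ∈ P.erase a | f x = pattern}
  have haP' : ∀ p ∈ P', a < p := fun p hp => P.min'_lt_of_mem_erase_min' hP (mem_filter.1 hp).1
  have hsub : insert a A ∪ P' ⊆ A ∪ P := by
    refine union_subset (insert_subset (mem_union_right _ haP) subset_union_left) ?_
    exact ((filter_subset _ _).trans (erase_subset _ _)).trans subset_union_right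
  refine ⟨a, fun h => (hAa a h).false, P', ?_, hsub, ?_, ?_⟩
  · intro b hb p hp
    rcases mem_insert.1 hb with rfl | hb
    exacts [haP' p hp, (hAa b hb).trans (haP' p hp)]
  · intro T hT hTk x hx y hy hTx hTy
    by_cases haT : a ∈ T
    · -- above `a`, only the pool `P'` remains, and there `f` is constant
      have hf : ∀ z ∈ insert a A ∪ P', a < z → f z = pattern := by
        intro z hz haz
        rcases mem_union.1 hz with hz | hz
        · rcases mem_insert.1 hz with rfl | hz
          exacts [absurd haz (lt_irrefl _), absurd haz (hAa z hz).asymm]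
        · exact (mem_filter.1 hz).2
      have hTs : T ∈ s := mem_powersetCard.2 ⟨hT, hTk⟩
      exact (congrFun (hf x hx (hTx a haT)) ⟨T, hTs⟩).trans
        (congrFun (hf y hy (hTy a haT)) ⟨T, hTs⟩).symm
    · exact hA T ((subset_insert_iff_of_notMem haT).1 hT) hTk x (hsub hx) y (hsub hy) hTx hTy
  · have hs : #s ≤ 2 ^ (#A + 1) := by
      rw [card_powersetCard]
      exact (Nat.choose_le_two_pow _ _).trans
        (Nat.pow_le_pow_right (by norm_num) (card_insert_le _ _))
    have hcard : Fintype.card (s → κ) ≤ K := by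
      rw [Fintype.card_fun, Fintype.card_coe]
      exact (Nat.pow_le_pow_right Fintype.card_pos hs).trans hK
    rw [← card_erase_add_one haP]
    exact hpattern.trans_le (by gcongr)

lemma exists_isEndHomogeneous_of_pow_le_card [Fintype κ] (C : Finset α → κ) {k K : ℕ}
    (j : ℕ) (A P : Finset α) (hAP : ∀ a ∈ A, ∀ p ∈ P, a < p)
    (hA : IsEndHomogeneous C k A (A ∪ P)) (hKj : Fintype.card κ ^ 2 ^ (#A + j) ≤ K)
    (hP : (2 * K) ^ j ≤ #P) :
    ∃ A' ⊆ A ∪ P, #A' = #A + j ∧ IsEndHomogeneous C k A' A' := by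
  induction j generalizing A P with
  | zero => exact ⟨A, subset_union_left, rfl, hA.anti subset_union_left⟩
  | succ j ih =>
    have : Nonempty κ := ⟨C ∅⟩
    have hK : 1 ≤ K := hKj.trans' (Nat.one_le_pow _ _ Fintype.card_pos)
    have hPne : P.Nonempty := card_pos.1 ((pow_pos (by omega) _).trans_le hP)
    obtain ⟨a, haA, P', hAP', hsub, hA', hPP'⟩ := hA.exists_insert hAP
      (hKj.trans' (Nat.pow_le_pow_right Fintype.card_pos (by gcongr <;> omega))) hPne
    have hP' : (2 * K) ^ j ≤ #P' := by
      have h : (2 * K) ^ j * (2 * K) ≤ K * (#P' + 1) := (pow_succ (2 * K) j).symm ▸ hP.trans hPP'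
      nlinarith [Nat.one_le_pow j (2 * K) (by omega)]
    obtain ⟨A', hA'sub, hA'card, hA'⟩ :=
      ih (insert a A) P' hAP' hA' (by rwa [card_insert_of_notMem haA, add_right_comm]) hP'
    exact ⟨A', hA'sub.trans hsub, by rw [hA'card, card_insert_of_notMem haA]; ring, hA'⟩

/-- When `A` is end-homogeneous, the choice of `z ∈ A` above `T` does not matter. -/
noncomputable def inducedColoring (C : Finset α → κ) (A T : Finset α) : κ :=
  if h : ∃ z ∈ A, ∀ t ∈ T, t < z then C (insert h.choose T) else C T

lemma IsEndHomogeneous.isHomogeneous_succ {C : Finset α → κ} {k : ℕ} {A M : Finset α}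
    (hA : IsEndHomogeneous C k A A) (hMA : M ⊆ A)
    (hM : IsHomogeneous (inducedColoring C A) k M) :
    IsHomogeneous C (k + 1) M := by
  have key : ∀ U ⊆ M, #U = k + 1 → ∃ T ⊆ M, #T = k ∧
      C U = inducedColoring C A T := by
    intro U hU hUk
    have hUne : U.Nonempty := card_pos.1 (by omega)
    have hzU := U.max'_mem hUne
    set z := U.max' hUne
    have hTz : ∀ t ∈ U.erase z, t < z := fun t ht =>
      (U.le_max' t (mem_of_mem_erase ht)).lt_of_ne (ne_of_mem_erase ht)
    have hTA : U.erase z ⊆ A := ((erase_subset _ _).trans hU).trans hMA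
    have hex : ∃ y ∈ A, ∀ t ∈ U.erase z, t < y := ⟨z, hMA (hU hzU), hTz⟩
    refine ⟨U.erase z, (erase_subset _ _).trans hU, by rw [card_erase_of_mem hzU]; omega, ?_⟩
    rw [inducedColoring, dif_pos hex]
    conv_lhs => rw [← insert_erase hzU]
    exact hA _ hTA (by rw [card_erase_of_mem hzU]; omega) z (hMA (hU hzU)) _ hex.choose_spec.1
      hTz hex.choose_spec.2
  intro U₁ hU₁ hU₁k U₂ hU₂ hU₂k
  obtain ⟨T₁, hT₁, hT₁k, h₁⟩ := key U₁ hU₁ hU₁k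
  obtain ⟨T₂, hT₂, hT₂k, h₂⟩ := key U₂ hU₂ hU₂k
  rw [h₁, h₂]
  exact hM hT₁ hT₁k hT₂ hT₂k

theorem exists_isHomogeneous [Fintype κ] {m n : ℕ} (hm : 2 ≤ m) (hn : n ≤ tow m)
    (hκ : Fintype.card κ ≤ tow m) {k : ℕ} (hk : 1 ≤ k) (C : Finset α → κ) {S : Finset α}
    (hS : tow (3 * k + m) ≤ #S) : ∃ M ⊆ S, #M = n ∧ IsHomogeneous C k M := by
  classical
  induction k, hk using Nat.le_induction generalizing C S with
  | base =>
    refine exists_isHomogeneous_one C (hS.trans' ?_)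
    calc Fintype.card κ * n ≤ tow m * tow m := Nat.mul_le_mul hκ hn
      _ ≤ tow (m + 1) := mul_self_le_two_pow (four_le_tow hm)
      _ ≤ tow (3 * 1 + m) := tow_mono (by omega)
  | succ k hk ih =>
    set x := tow (3 * k + m)
    have hx : 4 ≤ x := four_le_tow (by omega)
    have hbound : (2 * Fintype.card κ ^ 2 ^ x) ^ x ≤ #S :=
      calc (2 * Fintype.card κ ^ 2 ^ x) ^ x ≤ 2 ^ 2 ^ 2 ^ x :=
            two_mul_pow_two_pow_pow_le hx (hκ.trans (tow_mono (by omega)))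
        _ = tow (3 * (k + 1) + m) := by rw [show 3 * (k + 1) + m = 3 * k + m + 3 by ring]; rfl
        _ ≤ #S := hS
    obtain ⟨A, hAS, hAx, hA⟩ := exists_isEndHomogeneous_of_pow_le_card C x ∅ S
      (by simp) (isEndHomogeneous_empty hk _) (by rw [card_empty, zero_add]) hbound
    rw [empty_union] at hAS
    rw [card_empty, zero_add] at hAx
    obtain ⟨M, hMA, hMn, hM⟩ := ih (inducedColoring C A) hAx.ge
    exact ⟨M, hMA.trans hAS, hMn, hA.isHomogeneous_succ hMA hM⟩

end Ramsey

section Assignment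

variable {α : Type*} [LinearOrder α] {w : ℕ}

/-- The colour `c` of a task set `T`: worker `i` is assigned the `c i`-th smallest task of `T`.
This is the permutation `π` of the paper, recorded as a map `Fin w → Fin w`. -/
noncomputable def assignmentColoring (φ : Finset α → Fin w → α) (T : Finset α) :
    Fin w → Fin w :=
  if h : #T = w ∧ ∀ i, φ T i ∈ T then fun i => (T.orderIsoOfFin h.1).symm ⟨φ T i, h.2 i⟩
  else id

lemma apply_image_eq_apply_assignmentColoring (φ : Finset α → Fin w → α) {σ : Fin w → α}
    (hσ : StrictMono σ) (hφ : ∀ i, φ (univ.image σ) i ∈ univ.image σ) (i : Fin w) :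
    φ (univ.image σ) i = σ (assignmentColoring φ (univ.image σ) i) := by
  have hcard : #(univ.image σ) = w := by
    rw [card_image_of_injective _ hσ.injective, card_univ, Fintype.card_fin]
  have hσ' : σ = (univ.image σ).orderEmbOfFin hcard :=
    orderEmbOfFin_unique hcard (fun j => mem_image_of_mem _ (mem_univ j)) hσ
  rw [assignmentColoring, dif_pos ⟨hcard, hφ⟩, congrFun hσ', ← coe_orderIsoOfFin_apply,
    OrderIso.apply_symm_apply]

end Assignment

/-- there is a constant `C` such that for every `w > 0` and every
`t ≥ tow(C·w)`, every worker-task assignment function `φ` (assigning workers `[w]`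
bijectively to each `w`-element task set `T ⊆ [t]`) has switching cost exactly `w`:
there exist tasks `τ₁ < τ₂ < ⋯ < τ_{w+1}` such that the assignments for the adjacent
task sets `{τ₁, …, τ_w}` and `{τ₂, …, τ_{w+1}}` differ on every worker. -/
theorem lower_bound_switching_cost :
    ∃ C : ℕ, 0 < C ∧ ∀ w : ℕ, 0 < w → ∀ t : ℕ, tow (C * w) ≤ t →
      ∀ φ : Finset (Fin t) → (Fin w → Fin t),
        (∀ T : Finset (Fin t), T.card = w →
          Function.Injective (φ T) ∧ ∀ i, φ T i ∈ T) →
        ∃ τ : Fin (w + 1) → Fin t, StrictMono τ ∧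
          ∀ i : Fin w,
            φ (Finset.univ.image (fun j : Fin w => τ j.castSucc)) i ≠
            φ (Finset.univ.image (fun j : Fin w => τ j.succ)) i := by
  refine ⟨8, by norm_num, fun w hw t ht φ hφ => ?_⟩
  have hcolours : Fintype.card (Fin w → Fin w) ≤ tow (2 * w + 3) := by
    simpa using pow_self_le_tow w
  obtain ⟨M, -, hM, hMhom⟩ := exists_isHomogeneous (m := 2 * w + 3) (n := w + 1) (by omega)
    ((lt_tow _).le.trans' (by omega)) hcolours hw (assignmentColoring φ) (S := univ)
    (by rw [card_univ, Fintype.card_fin]; exact ht.trans' (tow_mono (by omega)))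
  set τ := M.orderEmbOfFin hM
  have hwindow {σ : Fin w → Fin t} (hσ : StrictMono σ) (hσM : ∀ j, σ j ∈ M) :
      univ.image σ ⊆ M ∧ #(univ.image σ) = w ∧
        ∀ i, φ (univ.image σ) i = σ (assignmentColoring φ (univ.image σ) i) := by
    have hcard : #(univ.image σ) = w := by
      rw [card_image_of_injective _ hσ.injective, card_univ, Fintype.card_fin]
    refine ⟨fun x hx => ?_, hcard, apply_image_eq_apply_assignmentColoring φ hσ (hφ _ hcard).2⟩
    obtain ⟨j, -, rfl⟩ := mem_image.1 hx
    exact hσM j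
  obtain ⟨hAM, hAw, hφA⟩ := hwindow (σ := fun j => τ j.castSucc)
    (τ.strictMono.comp Fin.strictMono_castSucc) (fun j => M.orderEmbOfFin_mem hM _)
  obtain ⟨hBM, hBw, hφB⟩ := hwindow (σ := fun j => τ j.succ)
    (τ.strictMono.comp Fin.strictMono_succ) (fun j => M.orderEmbOfFin_mem hM _)
  refine ⟨τ, τ.strictMono, fun i => ?_⟩
  rw [hφA, hφB, hMhom hAM hAw hBM hBw]
  exact (τ.strictMono Fin.castSucc_lt_succ).ne
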